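/- For α ∈ (0,1), r > 0, ε ∈ (0,r), and n ≥ 1 a natural number, the following identity of the Kipriyanov construction holds: (1/ε^α) ∫_0^r g(y)(r−y)^{α−1} y^{n−1} dy − α ∫_ε^r (r−y)^{α−1} dy ∫_0^{y−ε} g(t) t^{n−1} (y−t)^{−α−1} dt = (1/ε^α) ∫_0^{r} g(t) t^{n−1} [(r−t)^α − (r−t−ε)₊^α]/(r−t) dt, for every bounded measurable g on [0,r]. -/

import Mathlib

open MeasureTheory Real

/-!
Extending the inner integrand by zero off the region `t + ε ≤ y` turns the iterated integral into
an integral over the rectangle `(ε, r] × (0, r]`. There the integrand is dominated by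
`C ε^(-α-1) (r - y)^(α-1)`, which is integrable, so Fubini lets us integrate in `y` first; since
`(r - y)^α (y - t)^(-α)` has derivative `-α (r - t) (r - y)^(α-1) (y - t)^(-α-1)`, that inner
integral equals `(r - t - ε)₊^α / (α ε^α (r - t))`. The first term of the identity is matched by
`(r - t)^(α-1) = (r - t)^α / (r - t)`, valid for `t ≠ r`.
-/

open Set

section

variable {α ε r : ℝ}

lemma intervalIntegrable_sub_rpow (hα : 0 < α) (r a b : ℝ) :
    IntervalIntegrable (fun y => (r - y) ^ (α - 1)) volume a b := by
  simpa using (intervalIntegral.intervalIntegrable_rpow' (r := α - 1) (by linarith)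
    (a := r - a) (b := r - b)).comp_sub_left r

lemma hasDerivAt_sub_rpow_mul_sub_rpow_neg {t y : ℝ} (hty : t < y) (hyr : y < r) :
    HasDerivAt (fun y => (r - y) ^ α * (y - t) ^ (-α))
      (-(α * (r - t)) * ((r - y) ^ (α - 1) * (y - t) ^ (-α - 1))) y := by
  have hry : 0 < r - y := by linarith
  have hyt : 0 < y - t := by linarith
  have d1 := ((hasDerivAt_id y).const_sub r).rpow_const (p := α) (Or.inl hry.ne')
  have d2 := ((hasDerivAt_id y).sub_const t).rpow_const (p := -α) (Or.inl hyt.ne')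
  refine (d1.mul d2).congr_deriv ?_
  simp only [id_eq]
  rw [show (y - t) ^ (-α) = (y - t) ^ (-α - 1 + 1) by rw [sub_add_cancel],
    show (r - y) ^ α = (r - y) ^ (α - 1 + 1) by rw [sub_add_cancel],
    rpow_add_one hyt.ne', rpow_add_one hry.ne']
  ring

lemma integral_sub_rpow_mul_sub_rpow_neg (hα : 0 < α) (hε : 0 < ε) {t : ℝ} (ht : t + ε ≤ r) :
    ∫ y in (t + ε)..r, (r - y) ^ (α - 1) * (y - t) ^ (-α - 1) =
      1 / (α * ε ^ α) * ((r - t - ε) ^ α / (r - t)) := by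
  have hrt : 0 < r - t := by linarith
  have hyt : ∀ y ∈ Icc (t + ε) r, y - t ≠ 0 := fun y hy => by linarith [hy.1]
  have hcont : ContinuousOn (fun y => (r - y) ^ α * (y - t) ^ (-α)) (Icc (t + ε) r) :=
    ((continuousOn_const.sub continuousOn_id).rpow_const fun _ _ => Or.inr hα.le).mul
      ((continuousOn_id.sub continuousOn_const).rpow_const fun y hy => Or.inl (hyt y hy))
  have hint : IntervalIntegrable (fun y => (r - y) ^ (α - 1) * (y - t) ^ (-α - 1))
      volume (t + ε) r := by
    refine (intervalIntegrable_sub_rpow hα r _ _).mul_continuousOn ?_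
    rw [uIcc_of_le ht]
    exact (continuousOn_id.sub continuousOn_const).rpow_const fun y hy => Or.inl (hyt y hy)
  have hFTC := intervalIntegral.integral_eq_sub_of_hasDerivAt_of_le ht hcont
    (fun y hy => hasDerivAt_sub_rpow_mul_sub_rpow_neg (by linarith [hy.1]) hy.2)
    (hint.const_mul _)
  rw [intervalIntegral.integral_const_mul, sub_self, zero_rpow hα.ne', zero_mul,
    add_sub_cancel_left, ← sub_sub, rpow_neg hε.le] at hFTC
  have hεα : 0 < ε ^ α := rpow_pos_of_pos hε α
  field_simp at hFTC
  field_simp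
  linear_combination -hFTC

noncomputable def kipriyanovKernel (α ε r : ℝ) (φ : ℝ → ℝ) (p : ℝ × ℝ) : ℝ :=
  if p.2 + ε ≤ p.1 then (r - p.1) ^ (α - 1) * (φ p.2 * (p.1 - p.2) ^ (-α - 1)) else 0

variable {φ : ℝ → ℝ}

lemma measurable_kipriyanovKernel (hφ : Measurable φ) :
    Measurable (kipriyanovKernel α ε r φ) :=
  Measurable.ite (measurableSet_le (measurable_snd.add_const ε) measurable_fst)
    (((measurable_const.sub measurable_fst).pow_const _).mul
      ((hφ.comp measurable_snd).mul ((measurable_fst.sub measurable_snd).pow_const _)))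
    measurable_const

lemma integrable_kipriyanovKernel (hα : 0 < α) (hε : 0 < ε) {C : ℝ} (hφm : Measurable φ)
    (hφ : ∀ t ∈ Ioc 0 r, |φ t| ≤ C) :
    Integrable (kipriyanovKernel α ε r φ)
      ((volume.restrict (Ioc ε r)).prod (volume.restrict (Ioc 0 r))) := by
  have hdom : Integrable (fun p : ℝ × ℝ => C * ε ^ (-α - 1) * (r - p.1) ^ (α - 1))
      ((volume.restrict (Ioc ε r)).prod (volume.restrict (Ioc 0 r))) :=
    ((intervalIntegrable_sub_rpow hα r ε r).1.comp_fst _).const_mul _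
  refine hdom.mono' (measurable_kipriyanovKernel hφm).aestronglyMeasurable ?_
  rw [Measure.prod_restrict]
  filter_upwards [ae_restrict_mem (measurableSet_Ioc.prod measurableSet_Ioc)]
    with ⟨y, t⟩ ⟨hy, ht⟩
  have hry : 0 ≤ (r - y) ^ (α - 1) := rpow_nonneg (by linarith [hy.2]) _
  have hC : 0 ≤ C := (abs_nonneg _).trans (hφ t ht)
  dsimp only at hy ht ⊢
  unfold kipriyanovKernel
  split_ifs with hty
  · have hyt : 0 < y - t := by linarith
    have hdecay : (y - t) ^ (-α - 1) ≤ ε ^ (-α - 1) :=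
      rpow_le_rpow_of_nonpos hε (by linarith) (by linarith)
    calc ‖(r - y) ^ (α - 1) * (φ t * (y - t) ^ (-α - 1))‖
        = |φ t| * (y - t) ^ (-α - 1) * (r - y) ^ (α - 1) := by
          rw [norm_mul, norm_mul, Real.norm_of_nonneg hry,
            Real.norm_of_nonneg (rpow_nonneg hyt.le _), Real.norm_eq_abs]
          ring
      _ ≤ C * ε ^ (-α - 1) * (r - y) ^ (α - 1) := by
          gcongr
          exact hφ t ht
  · rw [norm_zero]
    positivity

lemma setIntegral_kipriyanovKernel_snd (hε : 0 ≤ ε) {y : ℝ} (hy : y ∈ Ioc ε r) :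
    ∫ t in Ioc 0 r, kipriyanovKernel α ε r φ (y, t) =
      (r - y) ^ (α - 1) * ∫ t in 0..(y - ε), φ t * (y - t) ^ (-α - 1) := by
  have hfiber : (fun t => kipriyanovKernel α ε r φ (y, t)) =
      (Iic (y - ε)).indicator fun t => (r - y) ^ (α - 1) * (φ t * (y - t) ^ (-α - 1)) := by
    ext t
    simp only [kipriyanovKernel, indicator, mem_Iic, le_sub_iff_add_le]
  have hdom : Ioc 0 r ∩ Iic (y - ε) = Ioc 0 (y - ε) := by
    rw [Ioc_inter_Iic, min_eq_right (by linarith [hy.2])]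
  rw [hfiber, setIntegral_indicator measurableSet_Iic, hdom, integral_const_mul,
    intervalIntegral.integral_of_le (by linarith [hy.1])]

lemma setIntegral_kipriyanovKernel_fst (hα : 0 < α) (hε : 0 < ε) {t : ℝ} (ht : 0 < t) :
    ∫ y in Ioc ε r, kipriyanovKernel α ε r φ (y, t) =
      1 / (α * ε ^ α) * (φ t * (max (r - t - ε) 0 ^ α / (r - t))) := by
  have hfiber : (fun y => kipriyanovKernel α ε r φ (y, t)) =
      (Ici (t + ε)).indicator fun y => φ t * ((r - y) ^ (α - 1) * (y - t) ^ (-α - 1)) := by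
    ext y
    simp only [kipriyanovKernel, indicator, mem_Ici]
    split_ifs <;> ring
  have hdom : Ioc ε r ∩ Ici (t + ε) = Icc (t + ε) r := by
    ext y
    simp only [mem_inter_iff, mem_Ioc, mem_Ici, mem_Icc]
    exact ⟨fun h => ⟨h.2, h.1.2⟩, fun h => ⟨⟨by linarith [h.1], h.2⟩, h.1⟩⟩
  rw [hfiber, setIntegral_indicator measurableSet_Ici, hdom]
  by_cases htr : t + ε ≤ r
  · rw [integral_Icc_eq_integral_Ioc, ← intervalIntegral.integral_of_le htr,
      intervalIntegral.integral_const_mul, integral_sub_rpow_mul_sub_rpow_neg hα hε htr,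
      max_eq_left (by linarith)]
    ring
  · rw [Icc_eq_empty htr, Measure.restrict_empty, integral_zero_measure,
      max_eq_right (by linarith), zero_rpow hα.ne', zero_div, mul_zero, mul_zero]

theorem integral_sub_rpow_mul_integral_eq (hα : 0 < α) (hε : 0 < ε) (hεr : ε ≤ r) {C : ℝ}
    (hφm : Measurable φ) (hφ : ∀ t ∈ Ioc 0 r, |φ t| ≤ C) :
    ∫ y in ε..r, (r - y) ^ (α - 1) * ∫ t in 0..(y - ε), φ t * (y - t) ^ (-α - 1) =
      1 / (α * ε ^ α) * ∫ t in 0..r, φ t * (max (r - t - ε) 0 ^ α / (r - t)) := by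
  rw [intervalIntegral.integral_of_le hεr, intervalIntegral.integral_of_le (hε.le.trans hεr),
    ← integral_const_mul]
  calc ∫ y in Ioc ε r, (r - y) ^ (α - 1) * ∫ t in 0..(y - ε), φ t * (y - t) ^ (-α - 1)
      = ∫ y in Ioc ε r, ∫ t in Ioc 0 r, kipriyanovKernel α ε r φ (y, t) :=
        setIntegral_congr_fun measurableSet_Ioc fun y hy =>
          (setIntegral_kipriyanovKernel_snd hε.le hy).symm
    _ = ∫ t in Ioc 0 r, ∫ y in Ioc ε r, kipriyanovKernel α ε r φ (y, t) :=
        integral_integral_swap (integrable_kipriyanovKernel hα hε hφm hφ)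
    _ = _ := setIntegral_congr_fun measurableSet_Ioc fun t ht =>
        setIntegral_kipriyanovKernel_fst hα hε ht.1

lemma intervalIntegrable_mul_rpow_max_sub_div (hα : 0 < α) (hε : 0 < ε) (hr : 0 ≤ r) {C : ℝ}
    (hφm : Measurable φ) (hφ : ∀ t ∈ Ioc 0 r, |φ t| ≤ C) :
    IntervalIntegrable (fun t => φ t * (max (r - t - ε) 0 ^ α / (r - t))) volume 0 r := by
  have h := (integrable_kipriyanovKernel hα hε hφm hφ).integral_prod_right.congr
    ((ae_restrict_mem measurableSet_Ioc).mono fun t ht =>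
      setIntegral_kipriyanovKernel_fst (φ := φ) (r := r) hα hε ht.1)
  rw [intervalIntegrable_iff_integrableOn_Ioc_of_le hr]
  exact (integrable_const_mul_iff (isUnit_iff_ne_zero.2 (by positivity)) _).1 h

lemma intervalIntegrable_mul_sub_rpow (hα : 0 < α) (hr : 0 ≤ r) {C : ℝ}
    (hφm : Measurable φ) (hφ : ∀ t ∈ Ioc 0 r, |φ t| ≤ C) :
    IntervalIntegrable (fun t => φ t * (r - t) ^ (α - 1)) volume 0 r := by
  rw [intervalIntegrable_iff_integrableOn_Ioc_of_le hr]
  exact (intervalIntegrable_sub_rpow hα r 0 r).1.bdd_mul hφm.aestronglyMeasurable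
    ((ae_restrict_mem measurableSet_Ioc).mono hφ)

end

theorem kipriyanov_fubini_identity_general
    (α ε r : ℝ) (n : ℕ)
    (hα : 0 < α) (hε : 0 < ε) (hεr : ε < r)
    (g : ℝ → ℝ) (hg : Measurable g) (hbd : ∃ M : ℝ, ∀ t, |g t| ≤ M) :
    (1 / ε ^ α) * (∫ y in (0:ℝ)..r, g y * (r - y) ^ (α - 1) * y ^ (n - 1)) -
        α * ∫ y in ε..r, (r - y) ^ (α - 1) *
          ∫ t in (0:ℝ)..(y - ε), g t * t ^ (n - 1) * (y - t) ^ (-α - 1) =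
      (1 / ε ^ α) * ∫ t in (0:ℝ)..r,
        g t * t ^ (n - 1) * (((r - t) ^ α - (max (r - t - ε) 0) ^ α) / (r - t)) := by
  obtain ⟨M, hM⟩ := hbd
  have hr : 0 ≤ r := by linarith
  have hφm : Measurable fun t => g t * t ^ (n - 1) := hg.mul (measurable_id.pow_const _)
  have hφ : ∀ t ∈ Ioc 0 r, |g t * t ^ (n - 1)| ≤ M * r ^ (n - 1) := fun t ht => by
    rw [abs_mul, abs_pow, abs_of_pos ht.1]
    exact mul_le_mul (hM t) (pow_le_pow_left₀ ht.1.le ht.2 _) (pow_nonneg ht.1.le _)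
      ((abs_nonneg _).trans (hM t))
  have hA : IntervalIntegrable (fun t => g t * (r - t) ^ (α - 1) * t ^ (n - 1)) volume 0 r :=
    (intervalIntegrable_mul_sub_rpow hα hr hφm hφ).congr_ae
      (ae_of_all _ fun t => mul_right_comm _ _ _)
  have hsplit : ∫ t in (0:ℝ)..r,
        g t * t ^ (n - 1) * (((r - t) ^ α - (max (r - t - ε) 0) ^ α) / (r - t)) =
      (∫ t in (0:ℝ)..r, g t * (r - t) ^ (α - 1) * t ^ (n - 1)) -
        ∫ t in (0:ℝ)..r, g t * t ^ (n - 1) * (max (r - t - ε) 0 ^ α / (r - t)) := by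
    rw [← intervalIntegral.integral_sub hA
      (intervalIntegrable_mul_rpow_max_sub_div hα hε hr hφm hφ)]
    refine intervalIntegral.integral_congr_ae ((volume.ae_ne r).mono fun t htr _ => ?_)
    rw [rpow_sub_one (sub_ne_zero.2 htr.symm)]
    ring
  rw [integral_sub_rpow_mul_integral_eq hα hε hεr.le hφm hφ, hsplit]
  field_simp

/-- The Fubini-type identity of the Kipriyanov construction: for bounded
measurable `g`, `α ∈ (0,1)`, `0 < ε < r` and `n ≥ 1`,
`(1/ε^α)∫_0^r g(y)(r−y)^{α−1}y^{n−1} dy − α∫_ε^r (r−y)^{α−1}∫_0^{y−ε} g(t)t^{n−1}(y−t)^{−α−1} dt dy`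
equals `(1/ε^α)∫_0^r g(t)t^{n−1}[(r−t)^α − (r−t−ε)₊^α]/(r−t) dt`. -/
theorem kipriyanov_fubini_identity
    (α ε r : ℝ) (n : ℕ) (hn : 1 ≤ n)
    (hα : 0 < α) (hα1 : α < 1) (hε : 0 < ε) (hεr : ε < r)
    (g : ℝ → ℝ) (hg : Measurable g) (hbd : ∃ M : ℝ, ∀ t, |g t| ≤ M) :
    (1 / ε ^ α) * (∫ y in (0:ℝ)..r, g y * (r - y) ^ (α - 1) * y ^ (n - 1)) -
        α * ∫ y in ε..r, (r - y) ^ (α - 1) *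
          ∫ t in (0:ℝ)..(y - ε), g t * t ^ (n - 1) * (y - t) ^ (-α - 1) =
      (1 / ε ^ α) * ∫ t in (0:ℝ)..r,
        g t * t ^ (n - 1) * (((r - t) ^ α - (max (r - t - ε) 0) ^ α) / (r - t)) :=
  kipriyanov_fubini_identity_general α ε r n hα hε hεr g hg hbd
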